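/- In the interference-limited three-node full-duplex scenario with α₁ = α₂ = 4 and P_b = P_u, the outage probability expression 1 − 2πλ ∫_0^∞ r exp(−λπr²) · exp(−2πλ ∫_r^∞ (T x/(T + (x/r)^4)) dx) · exp(−2πλ ∫_0^∞ (T y/(T + (y/r)^4)) dy) dr equals 1 − 1/(1 + √T·(arctan(√T) + π/2)), and in particular is independent of the density λ > 0. -/

import Mathlib

/-!
With `c = r² √T` the interference integrand `T x / (T + (x/r)⁴)` equals `c² x / (c² + x⁴)`, whose
antiderivative is `(c/2) arctan (x²/c)`. Both interference integrals are therefore multiples of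
`r²`, the integrand in `r` collapses to `r exp (-λπ C r²)` with `C = 1 + √T (arctan √T + π/2)`,
and `∫₀^∞ r exp (-b r²) dr = 1/(2b)` cancels the density `λ`.
-/

open Real Set MeasureTheory Filter Topology

theorem integral_Ioi_mul_exp_neg_mul_sq {b : ℝ} (hb : 0 < b) :
    ∫ r in Ioi (0 : ℝ), r * exp (-b * r ^ 2) = (2 * b)⁻¹ := by
  have h := integral_mul_cexp_neg_mul_sq (b := (b : ℂ)) (by simpa using hb)
  apply Complex.ofReal_injective
  rw [← integral_complex_ofReal]
  push_cast
  exact h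

theorem integral_Ioi_sq_mul_div_sq_add_pow_four {c a : ℝ} (hc : 0 < c) (ha : 0 ≤ a) :
    ∫ x in Ioi a, c ^ 2 * x / (c ^ 2 + x ^ 4) = c / 2 * (π / 2 - arctan (a ^ 2 / c)) := by
  have hderiv : ∀ x ∈ Ici a,
      HasDerivAt (fun x ↦ c / 2 * arctan (x ^ 2 / c)) (c ^ 2 * x / (c ^ 2 + x ^ 4)) x := by
    intro x _
    refine ((((hasDerivAt_pow 2 x).div_const c).arctan).const_mul (c / 2)).congr_deriv ?_
    have : 0 < c ^ 2 + x ^ 4 := by positivity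
    field_simp
    ring
  have hlim : Tendsto (fun x ↦ c / 2 * arctan (x ^ 2 / c)) atTop (𝓝 (c / 2 * (π / 2))) :=
    ((tendsto_arctan_atTop.mono_right nhdsWithin_le_nhds).comp
      ((tendsto_pow_atTop two_ne_zero).atTop_div_const hc)).const_mul _
  have hnonneg : ∀ x ∈ Ioi a, 0 ≤ c ^ 2 * x / (c ^ 2 + x ^ 4) := fun x hx ↦ by
    have : 0 ≤ x := ha.trans hx.le
    positivity
  rw [integral_Ioi_of_hasDerivAt_of_nonneg' hderiv hnonneg hlim]
  ring

theorem div_add_div_pow_four_eq {T r : ℝ} (hT : 0 ≤ T) (hr : r ≠ 0) (x : ℝ) :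
    T * x / (T + (x / r) ^ 4) = (r ^ 2 * √T) ^ 2 * x / ((r ^ 2 * √T) ^ 2 + x ^ 4) := by
  rw [mul_pow, ← pow_mul, sq_sqrt hT, div_pow]
  field_simp

theorem integral_Ioi_interference {T r a : ℝ} (hT : 0 < T) (hr : 0 < r) (ha : 0 ≤ a) :
    ∫ x in Ioi a, T * x / (T + (x / r) ^ 4)
      = r ^ 2 * √T / 2 * (π / 2 - arctan (a ^ 2 / (r ^ 2 * √T))) := by
  simp_rw [div_add_div_pow_four_eq hT.le hr.ne']
  exact integral_Ioi_sq_mul_div_sq_add_pow_four (by positivity) ha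

theorem integral_Ioi_self_interference {T r : ℝ} (hT : 0 < T) (hr : 0 < r) :
    ∫ x in Ioi r, T * x / (T + (x / r) ^ 4) = r ^ 2 * √T * arctan √T / 2 := by
  have hs : 0 < √T := sqrt_pos.mpr hT
  rw [integral_Ioi_interference hT hr hr.le, div_mul_cancel_left₀ (by positivity),
    arctan_inv_of_pos hs]
  ring

theorem integral_Ioi_zero_interference {T r : ℝ} (hT : 0 < T) (hr : 0 < r) :
    ∫ y in Ioi (0 : ℝ), T * y / (T + (y / r) ^ 4) = r ^ 2 * √T * π / 4 := by
  rw [integral_Ioi_interference hT hr le_rfl]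
  simp only [ne_eq, OfNat.ofNat_ne_zero, not_false_eq_true, zero_pow, zero_div, arctan_zero]
  ring

/-- In the interference-limited three-node FD scenario with `α₁ = α₂ = 4` and
`P_b = P_u`, the outage probability
`1 - 2πλ ∫_0^∞ r e^{-λπr²} e^{-2πλ ∫_r^∞ T x/(T+(x/r)⁴) dx} e^{-2πλ ∫_0^∞ T y/(T+(y/r)⁴) dy} dr`
equals `1 - 1/(1 + √T (arctan √T + π/2))`; in particular it is independent of `λ > 0`. -/
theorem outage_three_node_closed_form (l T : ℝ) (hl : 0 < l) (hT : 0 < T) :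
    1 - 2 * π * l * ∫ r in Set.Ioi (0 : ℝ),
        r * Real.exp (-l * π * r ^ 2)
          * Real.exp (-2 * π * l * ∫ x in Set.Ioi r, T * x / (T + (x / r) ^ 4))
          * Real.exp (-2 * π * l * ∫ y in Set.Ioi (0 : ℝ), T * y / (T + (y / r) ^ 4))
      = 1 - 1 / (1 + Real.sqrt T * (Real.arctan (Real.sqrt T) + π / 2)) := by
  set C := 1 + √T * (arctan √T + π / 2) with hC_def
  have hC : 0 < C := by
    have : 0 < arctan √T := arctan_pos.mpr (sqrt_pos.mpr hT)
    positivity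
  have hintegrand : ∀ r ∈ Ioi (0 : ℝ),
      r * exp (-l * π * r ^ 2)
          * exp (-2 * π * l * ∫ x in Ioi r, T * x / (T + (x / r) ^ 4))
          * exp (-2 * π * l * ∫ y in Ioi (0 : ℝ), T * y / (T + (y / r) ^ 4))
        = r * exp (-(l * π * C) * r ^ 2) := fun r hr ↦ by
    rw [integral_Ioi_self_interference hT hr, integral_Ioi_zero_interference hT hr, mul_assoc,
      mul_assoc, ← exp_add, ← exp_add]
    congr 2
    rw [hC_def]
    ring
  rw [setIntegral_congr_fun measurableSet_Ioi hintegrand,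
    integral_Ioi_mul_exp_neg_mul_sq (by positivity)]
  field_simp
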